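/- In any stable matching M of the extended instance I'_{3,3}(B), every hospital y_{4i+r} (0≤i≤n−1, 0≤r≤3) is matched in M to a resident belonging to the set X = {x_{4i+r}}. -/

import Mathlib

/-- A one-to-one HRC instance: residents are partitioned into single residents and
ordered couples; all hospitals have capacity 1. -/
structure HRC1 (R H : Type) where
  singles : List R
  couples : List (R × R)
  singlePref : R → List H
  couplePref : R × R → List (H × H)
  hospPref : H → List R

namespace HRC1

/-- `x` precedes `y` on the strict preference list `l`. -/
def Prefers {α : Type} [DecidableEq α] (l : List α) (x y : α) : Prop :=
  x ∈ l ∧ y ∈ l ∧ l.idxOf x < l.idxOf y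

variable {R H : Type} [DecidableEq R] [DecidableEq H]

/-- `M` is a matching of the instance `I`. -/
def IsMatching (I : HRC1 R H) (M : R → Option H) : Prop :=
  (∀ r₁ r₂ h, M r₁ = some h → M r₂ = some h → r₁ = r₂) ∧
  (∀ r ∈ I.singles, ∀ h, M r = some h → h ∈ I.singlePref r) ∧
  (∀ c ∈ I.couples,
    (M c.1 = none ∧ M c.2 = none) ∨
    ∃ hp ∈ I.couplePref c, M c.1 = some hp.1 ∧ M c.2 = some hp.2) ∧
  (∀ r, (M r).isSome → r ∈ I.singles ∨ ∃ c ∈ I.couples, r = c.1 ∨ r = c.2)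

/-- Hospital `h` is unmatched in `M`. -/
def HospFree (M : R → Option H) (h : H) : Prop := ∀ r, M r ≠ some h

/-- Hospital `h` is unmatched in `M`, or prefers `r` to its current assignee. -/
def HospOpenFor (I : HRC1 R H) (M : R → Option H) (h : H) (r : R) : Prop :=
  HospFree M h ∨ ∃ r', M r' = some h ∧ Prefers (I.hospPref h) r r'

/-- Blocking pair consisting of a single resident `r` and a hospital `h`. -/
def BlockSingle (I : HRC1 R H) (M : R → Option H) (r : R) (h : H) : Prop :=
  r ∈ I.singles ∧ h ∈ I.singlePref r ∧
  (M r = none ∨ ∃ h', M r = some h' ∧ Prefers (I.singlePref r) h h') ∧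
  I.HospOpenFor M h r

/-- Blocking pair consisting of a couple `c` and a pair of hospitals `hp` on its joint list. -/
def BlockCouple (I : HRC1 R H) (M : R → Option H) (c : R × R) (hp : H × H) : Prop :=
  c ∈ I.couples ∧ hp ∈ I.couplePref c ∧
  ((M c.1 = none ∧ M c.2 = none) ∨
    ∃ hp' ∈ I.couplePref c, M c.1 = some hp'.1 ∧ M c.2 = some hp'.2 ∧
      Prefers (I.couplePref c) hp hp') ∧
  (M c.1 = some hp.1 ∨ I.HospOpenFor M hp.1 c.1) ∧
  (M c.2 = some hp.2 ∨ I.HospOpenFor M hp.2 c.2)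

/-- `M` is a stable matching of the instance `I`. -/
def Stable (I : HRC1 R H) (M : R → Option H) : Prop :=
  I.IsMatching M ∧ (∀ r h, ¬ I.BlockSingle M r h) ∧ (∀ c hp, ¬ I.BlockCouple M c hp)

end HRC1

/-- An instance of (2,2)-E3-SAT: `m` clauses, each with exactly 3 literals over `n`
variables (a literal is a variable together with a polarity, `true` for positive);
`occ l` enumerates the two occurrences of the literal `l`, so that each of the literals
`vᵢ` and `¬vᵢ` appears exactly twice. -/
structure E3SAT (n m : ℕ) where
  clause : Fin m → Fin 3 → Fin n × Bool
  occ : Fin n × Bool → Fin 2 → Fin m × Fin 3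
  occ_spec : ∀ l r, clause (occ l r).1 (occ l r).2 = l
  occ_inj : ∀ l, occ l 0 ≠ occ l 1
  occ_surj : ∀ j s, ∃ r, occ (clause j s) r = (j, s)

namespace E3SAT

variable {n m : ℕ}

/-- `B` is satisfiable. -/
def Satisfiable (B : E3SAT n m) : Prop :=
  ∃ f : Fin n → Bool, ∀ j : Fin m, ∃ s : Fin 3, f (B.clause j s).1 = (B.clause j s).2

/-- The index (`0` or `1`) of the occurrence of its literal that position `s` of
clause `j` constitutes. -/
def rIdx (B : E3SAT n m) (j : Fin m) (s : Fin 3) : Fin 2 :=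
  if B.occ (B.clause j s) 0 = (j, s) then 0 else 1

end E3SAT

/-- Residents of the extended instance `I′₃₃(B)`: `X i r = x_{4i+r}`, `K i r = k_{4i+r}`,
`P j s = p_j^{s+1}`, `Q j = q_{j+1}`, `T j = t_{j+1}`, `U i r s = u^{s+1}_{4i+r}`
(0-based indices). -/
inductive Res3E (n m : ℕ)
  | X (i : Fin n) (r : Fin 4)
  | K (i : Fin n) (r : Fin 4)
  | P (j : Fin m) (s : Fin 6)
  | Q (j : Fin m)
  | T (j : Fin m)
  | U (i : Fin n) (r : Fin 4) (s : Fin 5)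
deriving DecidableEq

/-- Hospitals of the extended instance `I′₃₃(B)`: `Y i r = y_{4i+r}`, `L i r = l_{4i+r}`,
`C j s = c_j^{s+1}`, `Z j r = z_j^{r+1}`, `Hh i r s = h^{s+1}_{4i+r}` (0-based indices). -/
inductive Hos3E (n m : ℕ)
  | Y (i : Fin n) (r : Fin 4)
  | L (i : Fin n) (r : Fin 4)
  | C (j : Fin m) (s : Fin 3)
  | Z (j : Fin m) (r : Fin 5)
  | Hh (i : Fin n) (r : Fin 4) (s : Fin 4)
deriving DecidableEq

variable {n m : ℕ}

/-- The hospital `c(x_{4i+r})`: for `r ∈ {0,1}` the clause hospital of the `(r+1)`-th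
occurrence of `vᵢ`; for `r ∈ {2,3}` that of the `(r−1)`-th occurrence of `¬vᵢ`. -/
def cX (B : E3SAT n m) (i : Fin n) (r : Fin 4) : Hos3E n m :=
  have hr := r.isLt
  let o := B.occ (i, decide (r.val < 2)) ⟨r.val % 2, by omega⟩
  Hos3E.C o.1 o.2

/-- The resident `x(c_j^{s+1})` corresponding to the literal at position `s` of
clause `c_j`. -/
def xOfC (B : E3SAT n m) (j : Fin m) (s : Fin 3) : Res3E n m :=
  let l := B.clause j s
  have hv : (B.rIdx j s).val < 2 := (B.rIdx j s).isLt
  if l.2 then Res3E.X l.1 ⟨(B.rIdx j s).val, by omega⟩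
  else Res3E.X l.1 ⟨(B.rIdx j s).val + 2, by omega⟩

/-- The extended one-to-one HRC instance `I′₃₃(B)` constructed from the
(2,2)-E3-SAT instance `B`. -/
def instI33E (B : E3SAT n m) : HRC1 (Res3E n m) (Hos3E n m) where
  singles :=
    ((List.finRange m).map fun j => Res3E.Q j) ++
    ((List.finRange m).map fun j => Res3E.T j) ++
    ((List.finRange n).flatMap fun i =>
      (List.finRange 4).map fun r => Res3E.U i r 4)
  couples :=
    ((List.finRange n).flatMap fun i =>
      (List.finRange 4).map fun r => (Res3E.X i r, Res3E.K i r)) ++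
    ((List.finRange m).flatMap fun j =>
      (List.finRange 3).map fun s =>
        (Res3E.P j ⟨s.val, by have := s.isLt; omega⟩,
         Res3E.P j ⟨s.val + 3, by have := s.isLt; omega⟩)) ++
    ((List.finRange n).flatMap fun i =>
      (List.finRange 4).flatMap fun r =>
        [(Res3E.U i r 0, Res3E.U i r 1), (Res3E.U i r 2, Res3E.U i r 3)])
  singlePref := fun r => match r with
    | Res3E.Q j => [Hos3E.C j 0, Hos3E.C j 1, Hos3E.C j 2]
    | Res3E.T j => [Hos3E.Z j 2, Hos3E.Z j 3, Hos3E.Z j 4]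
    | Res3E.U i r s => if s = 4 then [Hos3E.Y i r, Hos3E.Hh i r 0] else []
    | _ => []
  couplePref := fun c => match c with
    | (Res3E.X i r, Res3E.K i' r') =>
        if i' = i ∧ r' = r then
          if r = 0 then
            [(Hos3E.Y i 0, Hos3E.L i 0), (cX B i 0, Hos3E.L i 1),
             (Hos3E.Y i 1, Hos3E.L i 1)]
          else if r = 1 then
            [(Hos3E.Y i 1, Hos3E.L i 1), (cX B i 1, Hos3E.L i 2),
             (Hos3E.Y i 2, Hos3E.L i 2)]
          else if r = 2 then
            [(Hos3E.Y i 3, Hos3E.L i 3), (cX B i 2, Hos3E.L i 2),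
             (Hos3E.Y i 2, Hos3E.L i 2)]
          else
            [(Hos3E.Y i 0, Hos3E.L i 0), (cX B i 3, Hos3E.L i 3),
             (Hos3E.Y i 3, Hos3E.L i 3)]
        else []
    | (Res3E.P j s, Res3E.P j' s') =>
        if hc : j' = j ∧ s.val < 3 ∧ s'.val = s.val + 3 then
          [(Hos3E.Z j 0, Hos3E.Z j 1),
           (Hos3E.C j ⟨s.val, hc.2.1⟩, Hos3E.Z j ⟨s.val + 2, by have := hc.2.1; omega⟩)]
        else []
    | (Res3E.U i r s, Res3E.U i' r' s') =>
        if i' = i ∧ r' = r then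
          if s = 0 ∧ s' = 1 then [(Hos3E.Hh i r 0, Hos3E.Hh i r 1)]
          else if s = 2 ∧ s' = 3 then
            [(Hos3E.Hh i r 0, Hos3E.Hh i r 3), (Hos3E.Hh i r 2, Hos3E.Hh i r 1)]
          else []
        else []
    | _ => []
  hospPref := fun hh => match hh with
    | Hos3E.Y i r =>
        (if r = 0 then [Res3E.X i 0, Res3E.X i 3]
         else if r = 1 then [Res3E.X i 1, Res3E.X i 0]
         else if r = 2 then [Res3E.X i 1, Res3E.X i 2]
         else [Res3E.X i 2, Res3E.X i 3]) ++ [Res3E.U i r 4]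
    | Hos3E.L i r =>
        if r = 0 then [Res3E.K i 3, Res3E.K i 0]
        else if r = 1 then [Res3E.K i 0, Res3E.K i 1]
        else if r = 2 then [Res3E.K i 2, Res3E.K i 1]
        else [Res3E.K i 3, Res3E.K i 2]
    | Hos3E.C j s =>
        [Res3E.P j ⟨s.val, by have := s.isLt; omega⟩, xOfC B j s, Res3E.Q j]
    | Hos3E.Z j r =>
        if r = 0 then [Res3E.P j 0, Res3E.P j 1, Res3E.P j 2]
        else if r = 1 then [Res3E.P j 5, Res3E.P j 4, Res3E.P j 3]
        else if r = 2 then [Res3E.P j 3, Res3E.T j]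
        else if r = 3 then [Res3E.P j 4, Res3E.T j]
        else [Res3E.P j 5, Res3E.T j]
    | Hos3E.Hh i r s =>
        if s = 0 then [Res3E.U i r 4, Res3E.U i r 0, Res3E.U i r 2]
        else if s = 1 then [Res3E.U i r 3, Res3E.U i r 1]
        else if s = 2 then [Res3E.U i r 2]
        else [Res3E.U i r 3]

/-! The single resident `u⁵_{4i+r}` ranks `y_{4i+r}` first, and `y_{4i+r}` ranks it below the
residents of `X` on its list. The couples `(u¹, u²)` and `(u³, u⁴)` competing for
`h¹, …, h⁴` have no stable configuration unless `u⁵`, ranked first by `h¹`, occupies `h¹`.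
So in a stable matching `u⁵` is not on `y_{4i+r}`, and since `u⁵` does not block with its first
choice, `y_{4i+r}` holds a resident it prefers to `u⁵`, that is, a member of `X`. -/

namespace HRC1

theorem prefers_cons_self {α : Type} [DecidableEq α] {x y : α} {l : List α} (hy : y ∈ l)
    (hxy : x ≠ y) : Prefers (x :: l) x y :=
  ⟨List.mem_cons_self, List.mem_cons_of_mem _ hy, by simp [List.idxOf_cons_ne _ hxy]⟩

theorem Prefers.cons {α : Type} [DecidableEq α] {x y z : α} {l : List α} (h : Prefers l x y)
    (hx : z ≠ x) (hy : z ≠ y) : Prefers (z :: l) x y :=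
  ⟨List.mem_cons_of_mem _ h.1, List.mem_cons_of_mem _ h.2.1, by
    simpa [List.idxOf_cons_ne _ hx, List.idxOf_cons_ne _ hy] using h.2.2⟩

theorem prefers_or_prefers {α : Type} [DecidableEq α] {x y : α} {l : List α} (hx : x ∈ l)
    (hy : y ∈ l) (hxy : x ≠ y) : Prefers l x y ∨ Prefers l y x := by
  rcases lt_trichotomy (l.idxOf x) (l.idxOf y) with h | h | h
  · exact Or.inl ⟨hx, hy, h⟩
  · exact absurd ((List.idxOf_inj hx).1 h) hxy
  · exact Or.inr ⟨hy, hx, h⟩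

variable {R H : Type}

/-- `IsMatching` only consults the residents' lists; this makes every assignment acceptable
to the hospital as well. -/
def MutuallyAcceptable (I : HRC1 R H) : Prop :=
  (∀ r ∈ I.singles, ∀ h ∈ I.singlePref r, r ∈ I.hospPref h) ∧
  ∀ c ∈ I.couples, ∀ hp ∈ I.couplePref c,
    c.1 ∈ I.hospPref hp.1 ∧ c.2 ∈ I.hospPref hp.2

variable {I : HRC1 R H} {M : R → Option H}

theorem IsMatching.mem_hospPref (hI : I.MutuallyAcceptable) (hM : I.IsMatching M) {r : R}
    {h : H} (hr : M r = some h) : r ∈ I.hospPref h := by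
  obtain ⟨-, hsingle, hcouple, hcover⟩ := hM
  rcases hcover r (by simp [hr]) with hs | ⟨c, hc, rfl | rfl⟩
  · exact hI.1 r hs h (hsingle r hs h hr)
  all_goals
    rcases hcouple c hc with ⟨h₁, h₂⟩ | ⟨hp, hp_mem, h₁, h₂⟩
    · simp_all
    · have := hI.2 c hc hp hp_mem
      simp_all

theorem hospFree_of_forall_ne (hI : I.MutuallyAcceptable) (hM : I.IsMatching M) {h : H}
    (hfree : ∀ r ∈ I.hospPref h, M r ≠ some h) : HospFree M h :=
  fun r hr => hfree r (hM.mem_hospPref hI hr) hr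

theorem IsMatching.couple_unmatched_or_eq (hM : I.IsMatching M) {c : R × R} {hp : H × H}
    (hc : c ∈ I.couples) (hl : I.couplePref c = [hp]) :
    (M c.1 = none ∧ M c.2 = none) ∨ (M c.1 = some hp.1 ∧ M c.2 = some hp.2) := by
  rcases hM.2.2.1 c hc with h | ⟨hp', hp'_mem, h⟩
  · exact Or.inl h
  · rw [hl, List.mem_singleton] at hp'_mem
    exact Or.inr (hp'_mem ▸ h)

variable [DecidableEq R] [DecidableEq H]

theorem Stable.exists_prefers_of_ne_head (hI : I.MutuallyAcceptable) (hM : I.Stable M) {r : R}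
    {h : H} {l : List H} (hr : r ∈ I.singles) (hl : I.singlePref r = h :: l)
    (hne : M r ≠ some h) : ∃ r', M r' = some h ∧ Prefers (I.hospPref h) r' r := by
  by_contra hcon
  simp only [not_exists, not_and] at hcon
  refine hM.2.1 r h ⟨hr, hl ▸ List.mem_cons_self, ?_, ?_⟩
  · rcases hMr : M r with _ | h'
    · exact Or.inl rfl
    · have hh' : h' ∈ h :: l := hl ▸ hM.1.2.1 r hr h' hMr
      have hne' : h ≠ h' := fun e => hne (e ▸ hMr)
      exact Or.inr ⟨h', rfl,
        hl ▸ prefers_cons_self ((List.mem_cons.1 hh').resolve_left hne'.symm) hne'⟩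
  · by_cases hfree : HospFree M h
    · exact Or.inl hfree
    · obtain ⟨r', hr'⟩ : ∃ r', M r' = some h := by simpa [HospFree] using hfree
      have hrr' : r ≠ r' := fun e => hne (e ▸ hr')
      refine Or.inr ⟨r', hr', ?_⟩
      exact (prefers_or_prefers (hI.1 r hr h (hl ▸ List.mem_cons_self))
        (hM.1.mem_hospPref hI hr') hrr').resolve_right (hcon r' hr')

/-- Unless `u₅` takes `h₁`, the two couples have no stable configuration: unmatched,
`(u₃, u₄)` blocks with `(h₁, h₄)` or `(h₃, h₂)`; on `(h₁, h₄)` it is displaced from `h₁`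
by `(u₁, u₂)`; on `(h₃, h₂)` it blocks with its first choice `(h₁, h₄)`. -/
theorem Stable.eq_some_of_gadget (hI : I.MutuallyAcceptable) (hM : I.Stable M)
    {u₁ u₂ u₃ u₄ u₅ : R} {h₁ h₂ h₃ h₄ : H}
    (hu : [u₁, u₂, u₃, u₄, u₅].Nodup) (hh : [h₁, h₂, h₃, h₄].Nodup)
    (hc₁ : (u₁, u₂) ∈ I.couples) (hc₂ : (u₃, u₄) ∈ I.couples)
    (hl₁ : I.couplePref (u₁, u₂) = [(h₁, h₂)])
    (hl₂ : I.couplePref (u₃, u₄) = [(h₁, h₄), (h₃, h₂)])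
    (hp₁ : I.hospPref h₁ = [u₅, u₁, u₃]) (hp₂ : I.hospPref h₂ = [u₄, u₂])
    (hp₃ : I.hospPref h₃ = [u₃]) (hp₄ : I.hospPref h₄ = [u₄]) :
    M u₅ = some h₁ := by
  obtain ⟨hm, -, hblock⟩ := hM
  have free {h : H} := hospFree_of_forall_ne (h := h) hI hm
  simp only [List.nodup_cons, List.mem_cons, List.not_mem_nil, or_false, not_or] at hu hh
  obtain ⟨⟨-, hu₁₃, -, hu₁₅⟩, ⟨-, hu₂₄, -⟩, ⟨-, hu₃₅⟩, -⟩ := hu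
  obtain ⟨⟨-, hh₁₃, -⟩, ⟨-, hh₂₄⟩, -⟩ := hh
  by_contra h₅
  have hc₁' := hm.couple_unmatched_or_eq hc₁ hl₁
  rcases hm.2.2.1 _ hc₂ with ⟨e₃, e₄⟩ | ⟨hp, hp_mem, e₃, e₄⟩
  · rcases hc₁' with ⟨e₁, e₂⟩ | ⟨e₁, e₂⟩
    · refine hblock (u₃, u₄) (h₁, h₄) ⟨hc₂, by simp [hl₂], Or.inl ⟨e₃, e₄⟩,
        Or.inr (Or.inl (free ?_)), Or.inr (Or.inl (free ?_))⟩ <;> simp_all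
    · refine hblock (u₃, u₄) (h₃, h₂) ⟨hc₂, by simp [hl₂], Or.inl ⟨e₃, e₄⟩,
        Or.inr (Or.inl (free ?_)), Or.inr (Or.inr ⟨u₂, e₂, ?_⟩)⟩
      · simp_all
      · rw [hp₂]
        exact prefers_cons_self (by simp) (Ne.symm hu₂₄)
  rw [hl₂] at hp_mem
  simp only [List.mem_cons, List.not_mem_nil, or_false] at hp_mem
  rcases hp_mem with rfl | rfl
  · have e₁₂ : M u₁ = none ∧ M u₂ = none :=
      hc₁'.resolve_right fun ⟨e₁, _⟩ => hu₁₃ (hm.1 _ _ _ e₁ e₃)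
    refine hblock (u₁, u₂) (h₁, h₂) ⟨hc₁, by simp [hl₁], Or.inl e₁₂,
      Or.inr (Or.inr ⟨u₃, e₃, ?_⟩), Or.inr (Or.inl (free ?_))⟩
    · rw [hp₁]
      exact (prefers_cons_self (by simp) hu₁₃).cons (Ne.symm hu₁₅) (Ne.symm hu₃₅)
    · simp_all [Ne.symm hh₂₄]
  · have e₁ : M u₁ ≠ some h₁ := fun e₁ =>
      hc₁'.elim (fun ⟨e₁', _⟩ => by simp [e₁'] at e₁) (fun ⟨_, e₂⟩ => hu₂₄ (hm.1 _ _ _ e₂ e₄))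
    refine hblock (u₃, u₄) (h₁, h₄) ⟨hc₂, by simp [hl₂],
      Or.inr ⟨(h₃, h₂), by simp [hl₂], e₃, e₄, ?_⟩,
      Or.inr (Or.inl (free ?_)), Or.inr (Or.inl (free ?_))⟩
    · rw [hl₂]
      exact prefers_cons_self (by simp) (by simp [hh₁₃])
    · simp_all [Ne.symm hh₁₃]
    · simp_all

end HRC1

theorem E3SAT.rIdx_occ (B : E3SAT n m) (l : Fin n × Bool) (k : Fin 2) :
    B.rIdx (B.occ l k).1 (B.occ l k).2 = k := by
  unfold E3SAT.rIdx
  rw [B.occ_spec]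
  fin_cases k
  · simp
  · simp [B.occ_inj l]

theorem X_mem_hospPref_cX (B : E3SAT n m) (i : Fin n) (r : Fin 4) :
    Res3E.X i r ∈ (instI33E B).hospPref (cX B i r) := by
  fin_cases r <;> simp [cX, instI33E, xOfC, B.occ_spec, B.rIdx_occ]

theorem instI33E_mutuallyAcceptable (B : E3SAT n m) : (instI33E B).MutuallyAcceptable := by
  constructor
  · intro r hr h hh
    simp [instI33E] at hr
    rcases hr with ⟨j, rfl⟩ | ⟨j, rfl⟩ | ⟨i, r, rfl⟩ <;> simp [instI33E] at hh <;>
      rcases hh with rfl | rfl | rfl <;> simp [instI33E]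
  · intro c hc hp hhp
    simp [instI33E] at hc
    rcases hc with ⟨i, r, rfl⟩ | ⟨j, s, rfl⟩ | ⟨i, r, rfl | rfl⟩
    · fin_cases r <;> simp [instI33E] at hhp <;> rcases hhp with rfl | rfl | rfl <;>
        refine ⟨?_, ?_⟩ <;> first | exact X_mem_hospPref_cX B i _ | simp [instI33E]
    · fin_cases s <;> simp [instI33E] at hhp <;> rcases hhp with rfl | rfl <;> simp [instI33E]
    all_goals simp [instI33E] at hhp; rcases hhp with rfl | rfl <;> simp [instI33E]

theorem exists_eq_X_of_prefers_hospPref_Y {B : E3SAT n m} {i : Fin n} {r : Fin 4}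
    {res : Res3E n m}
    (h : HRC1.Prefers ((instI33E B).hospPref (Hos3E.Y i r)) res (Res3E.U i r 4)) :
    ∃ i' r', res = Res3E.X i' r' := by
  obtain ⟨hmem, -, hlt⟩ := h
  fin_cases r <;> simp [instI33E] at hmem <;> rcases hmem with rfl | rfl | rfl <;> simp at hlt ⊢

theorem instI33E_U_four_eq_of_stable {B : E3SAT n m} {M : Res3E n m → Option (Hos3E n m)}
    (hM : (instI33E B).Stable M) (i : Fin n) (r : Fin 4) :
    M (Res3E.U i r 4) = some (Hos3E.Hh i r 0) := by
  apply hM.eq_some_of_gadget (instI33E_mutuallyAcceptable B)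
    (u₁ := Res3E.U i r 0) (u₂ := Res3E.U i r 1) (u₃ := Res3E.U i r 2) (u₄ := Res3E.U i r 3)
    (h₂ := Hos3E.Hh i r 1) (h₃ := Hos3E.Hh i r 2) (h₄ := Hos3E.Hh i r 3) <;> simp [instI33E]

/-- In any stable matching `M` of the extended instance `I′₃₃(B)`, every hospital
`y_{4i+r}` is matched in `M` to a resident belonging to `X = {x_{4i+r}}`. -/
theorem y_matched_to_X {n m : ℕ} (B : E3SAT n m)
    (M : Res3E n m → Option (Hos3E n m)) (hM : (instI33E B).Stable M) :
    ∀ (i : Fin n) (r : Fin 4), ∃ (i' : Fin n) (r' : Fin 4),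
      M (Res3E.X i' r') = some (Hos3E.Y i r) := by
  intro i r
  obtain ⟨res, hres, hpref⟩ := hM.exists_prefers_of_ne_head (instI33E_mutuallyAcceptable B)
    (r := Res3E.U i r 4) (h := Hos3E.Y i r) (l := [Hos3E.Hh i r 0]) (by simp [instI33E])
    (by simp [instI33E]) (by simp [instI33E_U_four_eq_of_stable hM i r])
  obtain ⟨i', r', rfl⟩ := exists_eq_X_of_prefers_hospPref_Y hpref
  exact ⟨i', r', hres⟩
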